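/- A dibaric algebra (A, (f,g)) is conservative if and only if x²y = f(x)(xy) for all x, y ∈ A. -/

import Mathlib

/-!
Call `ab - (f(a) b + f(b) a) / 2` the defect of the pair `(a, b)`. A form is `f`-invariant exactly
when it kills every defect, so by duality in vector spaces `J_f^⊥` is the span of the defects;
in particular `x² - f(x) x ∈ J_f^⊥`. Conversely, polarizing `x²y = f(x)(xy)` shows that every defect
annihilates `A`, while an annihilating `z` has `f(z) = 0` (as `g ≠ 0`), whence `F(z) = 0` for every
invariant `F` (as `f ≠ 0`).
-/

namespace Dibaric

open Submodule

variable {K A : Type*} [Field K] [AddCommGroup A] [Module K A]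
  (mul : A →ₗ[K] A →ₗ[K] A) (f : A →ₗ[K] K)

def IsInvariantForm (F : A →ₗ[K] K) : Prop :=
  ∀ a b : A, F (mul a b) = (f a * F b + f b * F a) / 2

def invariantFormsPerp : Set A :=
  {z | ∀ F : A →ₗ[K] K, IsInvariantForm mul f F → F z = 0}

def defect (a b : A) : A :=
  mul a b - (2 : K)⁻¹ • (f a • b + f b • a)

def defectSpan : Submodule K A :=
  span K (Set.range (Function.uncurry (defect mul f)))

theorem defect_mem_defectSpan (a b : A) : defect mul f a b ∈ defectSpan mul f :=
  subset_span ⟨(a, b), rfl⟩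

theorem isInvariantForm_iff_mem_dualAnnihilator (F : A →ₗ[K] K) :
    IsInvariantForm mul f F ↔ F ∈ (defectSpan mul f).dualAnnihilator := by
  rw [mem_dualAnnihilator]
  change _ ↔ defectSpan mul f ≤ LinearMap.ker F
  rw [defectSpan, span_le, Set.range_subset_iff]
  simp only [IsInvariantForm, Prod.forall, Function.uncurry_apply_pair, SetLike.mem_coe,
    LinearMap.mem_ker, defect, map_sub, map_smul, map_add, smul_eq_mul, sub_eq_zero]
  simp only [div_eq_inv_mul]

theorem invariantFormsPerp_eq_defectSpan :
    invariantFormsPerp mul f = defectSpan mul f := by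
  ext z
  simp only [invariantFormsPerp, Set.mem_ofPred_eq, SetLike.mem_coe,
    isInvariantForm_iff_mem_dualAnnihilator]
  exact Subspace.forall_mem_dualAnnihilator_apply_eq_zero_iff _ z

theorem defect_self [NeZero (2 : K)] (x : A) : defect mul f x x = mul x x - f x • x := by
  rw [defect, ← two_smul K, smul_smul, inv_mul_cancel₀ two_ne_zero, one_smul]

theorem two_smul_mul_mul_eq (hcomm : ∀ x y : A, mul x y = mul y x)
    (hid : ∀ x y : A, mul (mul x x) y = f x • mul x y) (a b u : A) :
    (2 : K) • mul (mul a b) u = f a • mul b u + f b • mul a u := by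
  have h := hid (a + b) u
  simp only [map_add, LinearMap.add_apply, hcomm b a, hid a u, hid b u, add_smul, smul_add] at h
  rw [two_smul]
  linear_combination (norm := module) h

theorem defectSpan_le_ker [NeZero (2 : K)] (hcomm : ∀ x y : A, mul x y = mul y x)
    (hid : ∀ x y : A, mul (mul x x) y = f x • mul x y) :
    defectSpan mul f ≤ LinearMap.ker mul := by
  rw [defectSpan, span_le, Set.range_subset_iff]
  rintro ⟨a, b⟩
  ext u
  have h := two_smul_mul_mul_eq mul f hcomm hid a b u
  simp only [Function.uncurry_apply_pair, defect, map_sub,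
    map_smul, map_add, LinearMap.sub_apply, LinearMap.smul_apply, LinearMap.add_apply,
    LinearMap.zero_apply]
  rw [← h, smul_smul, inv_mul_cancel₀ two_ne_zero, one_smul, sub_self]

variable [NeZero (2 : K)] {mul f} {g : A →ₗ[K] K}

theorem map_eq_zero_of_mem_ker (hfg : ∀ x y : A, f (mul x y) = (f x * g y + f y * g x) / 2)
    (hg : g ≠ 0) {z : A} (hz : z ∈ LinearMap.ker mul) : f z = 0 := by
  have hsym : ∀ x, f z * g x + f x * g z = 0 := fun x => by
    have := hfg z x
    rw [LinearMap.mem_ker.mp hz, LinearMap.zero_apply, map_zero, eq_comm, div_eq_zero_iff] at this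
    exact this.resolve_right two_ne_zero
  by_contra hfz
  have hgz : g z = 0 := by
    have h2 : (2 * f z) * g z = 0 := by linear_combination hsym z
    exact (mul_eq_zero.mp h2).resolve_left (mul_ne_zero two_ne_zero hfz)
  exact hg (LinearMap.ext fun x => by simpa [hgz, hfz] using hsym x)

theorem ker_subset_invariantFormsPerp
    (hfg : ∀ x y : A, f (mul x y) = (f x * g y + f y * g x) / 2) (hf : f ≠ 0) (hg : g ≠ 0) :
    (LinearMap.ker mul : Set A) ⊆ invariantFormsPerp mul f := by
  intro z hz F hF
  obtain ⟨x, hx⟩ : ∃ x, f x ≠ 0 := by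
    by_contra! h
    exact hf (LinearMap.ext h)
  have := hF z x
  rw [LinearMap.mem_ker.mp hz, LinearMap.zero_apply, map_zero, map_eq_zero_of_mem_ker hfg hg hz,
    zero_mul, zero_add, eq_comm, div_eq_zero_iff, mul_eq_zero] at this
  exact (this.resolve_right two_ne_zero).resolve_left hx

end Dibaric

open Dibaric in
theorem stmt_7 (A : Type*) [AddCommGroup A] [Module ℝ A]
    (mul : A →ₗ[ℝ] A →ₗ[ℝ] A)
    (hcomm : ∀ x y : A, mul x y = mul y x)
    (f g : A →ₗ[ℝ] ℝ) (hf : f ≠ 0) (hg : g ≠ 0)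
    (hbq : ∀ x y : A, f (mul x y) = (f x * g y + f y * g x) / 2 ∧
                      g (mul x y) = (f x * g y + f y * g x) / 2) :
    ({z : A | ∀ F : A →ₗ[ℝ] ℝ,
        (∀ a b : A, F (mul a b) = (f a * F b + f b * F a) / 2) → F z = 0}
      = {z : A | ∀ t : A, mul z t = 0})
    ↔
    (∀ x y : A, mul (mul x x) y = f x • mul x y) := by
  have hann : {z : A | ∀ t : A, mul z t = 0} = LinearMap.ker mul := by
    ext z
    simp [LinearMap.ext_iff]
  change invariantFormsPerp mul f = _ ↔ _
  rw [hann, invariantFormsPerp_eq_defectSpan, SetLike.coe_set_eq]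
  constructor
  · intro hcons x y
    have hx := hcons ▸ defect_mem_defectSpan mul f x x
    rw [defect_self, LinearMap.mem_ker, map_sub, map_smul, sub_eq_zero] at hx
    exact LinearMap.congr_fun hx y
  · intro hid
    refine le_antisymm (defectSpan_le_ker mul f hcomm hid) ?_
    rw [← SetLike.coe_subset_coe, ← invariantFormsPerp_eq_defectSpan]
    exact ker_subset_invariantFormsPerp (fun x y => (hbq x y).1) hf hg
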